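/- arXiv:1211.6339 — 3 statements merged into one kernel-verified Lean document; each statement's English description precedes it below -/
import Mathlib

section
/- Let X = ξ∂ₓ + η∂_y be a vector field of the form (a₀ + a₁₁x + a₁₂y)∂ₓ + (b₀ + a₂₁x + a₂₂y)∂_y + (c₁x + c₂y)(x∂ₓ + y∂_y) on ℝ², and let X⁽¹⁾ = ξ∂ₓ + η∂_y + ζ∂_p be its prolongation with ζ = η_x + p(η_y - ξ_x) - p²ξ_y. Lift X⁽¹⁾ to the bundle ℝ⁵(x,y,p,f,g) → ℝ³(x,y,p) by adding components (ζ_p f + ζ_y g + ζ_x − (ξ_p f + ξ_y g + ξ_x)f)∂_f + (η_p f + η_y g + η_x − (ξ_p f + ξ_y g + ξ_x)g)∂_g. Then the function I₀ = p − g satisfies X̂(I₀) = μ·I₀ where μ = −a₁₁ + a₂₂ − a₁₂(p+g) − c₁x + c₂(y − x(p+g)); in particular I₀ is a relative invariant of the 𝔰𝔩₃-action. -/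
/-- Partial derivatives of a function on ℝ³(x,y,p). -/
noncomputable def pdx3 (F : ℝ × ℝ × ℝ → ℝ) (q : ℝ × ℝ × ℝ) : ℝ :=
  deriv (fun t => F (t, q.2.1, q.2.2)) q.1
noncomputable def pdy3 (F : ℝ × ℝ × ℝ → ℝ) (q : ℝ × ℝ × ℝ) : ℝ :=
  deriv (fun t => F (q.1, t, q.2.2)) q.2.1
noncomputable def pdp3 (F : ℝ × ℝ × ℝ → ℝ) (q : ℝ × ℝ × ℝ) : ℝ :=
  deriv (fun t => F (q.1, q.2.1, t)) q.2.2

/-- The ξ-component of the 𝔰𝔩₃ vector field, viewed on ℝ³(x,y,p) (it does not depend on p). -/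
def Xi (a₀ a₁₁ a₁₂ c₁ c₂ : ℝ) : ℝ × ℝ × ℝ → ℝ :=
  fun q => a₀ + a₁₁ * q.1 + a₁₂ * q.2.1 + (c₁ * q.1 + c₂ * q.2.1) * q.1

/-- The η-component of the 𝔰𝔩₃ vector field, viewed on ℝ³(x,y,p). -/
def Eta (b₀ a₂₁ a₂₂ c₁ c₂ : ℝ) : ℝ × ℝ × ℝ → ℝ :=
  fun q => b₀ + a₂₁ * q.1 + a₂₂ * q.2.1 + (c₁ * q.1 + c₂ * q.2.1) * q.2.1

/-- The contact prolongation component `ζ = η_x + p(η_y − ξ_x) − p²ξ_y`. -/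
noncomputable def Zeta (a₀ a₁₁ a₁₂ b₀ a₂₁ a₂₂ c₁ c₂ : ℝ) : ℝ × ℝ × ℝ → ℝ :=
  fun q => pdx3 (Eta b₀ a₂₁ a₂₂ c₁ c₂) q
    + q.2.2 * (pdy3 (Eta b₀ a₂₁ a₂₂ c₁ c₂) q - pdx3 (Xi a₀ a₁₁ a₁₂ c₁ c₂) q)
    - q.2.2 ^ 2 * pdy3 (Xi a₀ a₁₁ a₁₂ c₁ c₂) q

/-! The components `ξ`, `η` are quadratic polynomials in `(x, y)` not involving `p`, so their
partial derivatives are affine and `ξ_p = η_p = 0`; in particular the `f`-terms of `X̂(I₀)` vanish,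
and once the derivatives are substituted the claim is a polynomial identity in `x, y, p, g`. -/

theorem hasDerivAt_quadratic (A B C t : ℝ) :
    HasDerivAt (fun t => A + B * t + C * t ^ 2) (B + 2 * C * t) t := by
  have h := (((hasDerivAt_id' t).const_mul B).const_add A).add ((hasDerivAt_pow 2 t).const_mul C)
  exact h.congr_deriv (by norm_num; ring)

theorem pdx3_eq_of_quadratic {F : ℝ × ℝ × ℝ → ℝ} {x y p A B C : ℝ}
    (hF : ∀ t, F (t, y, p) = A + B * t + C * t ^ 2) : pdx3 F (x, y, p) = B + 2 * C * x := by
  simp only [pdx3, hF]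
  exact (hasDerivAt_quadratic A B C x).deriv

theorem pdy3_eq_of_quadratic {F : ℝ × ℝ × ℝ → ℝ} {x y p A B C : ℝ}
    (hF : ∀ t, F (x, t, p) = A + B * t + C * t ^ 2) : pdy3 F (x, y, p) = B + 2 * C * y := by
  simp only [pdy3, hF]
  exact (hasDerivAt_quadratic A B C y).deriv

section Partials

variable (a₀ a₁₁ a₁₂ b₀ a₂₁ a₂₂ c₁ c₂ x y p : ℝ)

theorem pdx3_Xi : pdx3 (Xi a₀ a₁₁ a₁₂ c₁ c₂) (x, y, p) = a₁₁ + 2 * c₁ * x + c₂ * y := by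
  rw [pdx3_eq_of_quadratic (A := a₀ + a₁₂ * y) (B := a₁₁ + c₂ * y) (C := c₁)
    fun t => by simp only [Xi]; ring]
  ring

theorem pdy3_Xi : pdy3 (Xi a₀ a₁₁ a₁₂ c₁ c₂) (x, y, p) = a₁₂ + c₂ * x := by
  rw [pdy3_eq_of_quadratic (A := a₀ + a₁₁ * x + c₁ * x ^ 2) (B := a₁₂ + c₂ * x) (C := 0)
    fun t => by simp only [Xi]; ring]
  ring

theorem pdp3_Xi : pdp3 (Xi a₀ a₁₁ a₁₂ c₁ c₂) (x, y, p) = 0 := by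
  simp [pdp3, Xi]

theorem pdx3_Eta : pdx3 (Eta b₀ a₂₁ a₂₂ c₁ c₂) (x, y, p) = a₂₁ + c₁ * y := by
  rw [pdx3_eq_of_quadratic (A := b₀ + a₂₂ * y + c₂ * y ^ 2) (B := a₂₁ + c₁ * y) (C := 0)
    fun t => by simp only [Eta]; ring]
  ring

theorem pdy3_Eta : pdy3 (Eta b₀ a₂₁ a₂₂ c₁ c₂) (x, y, p) = a₂₂ + c₁ * x + 2 * c₂ * y :=
  pdy3_eq_of_quadratic (A := b₀ + a₂₁ * x) (B := a₂₂ + c₁ * x) (C := c₂)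
    fun t => by simp only [Eta]; ring

theorem pdp3_Eta : pdp3 (Eta b₀ a₂₁ a₂₂ c₁ c₂) (x, y, p) = 0 := by
  simp [pdp3, Eta]

end Partials

/-- Since `I₀ = p − g` depends only on `p` and `g`, `X̂(I₀)` is `ζ` minus the `∂_g`-component
of `X̂`. -/
theorem I0_relative_invariant (a₀ a₁₁ a₁₂ b₀ a₂₁ a₂₂ c₁ c₂ : ℝ) (x y p f g : ℝ) :
    Zeta a₀ a₁₁ a₁₂ b₀ a₂₁ a₂₂ c₁ c₂ (x, y, p)
      - (pdp3 (Eta b₀ a₂₁ a₂₂ c₁ c₂) (x, y, p) * f + pdy3 (Eta b₀ a₂₁ a₂₂ c₁ c₂) (x, y, p) * g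
          + pdx3 (Eta b₀ a₂₁ a₂₂ c₁ c₂) (x, y, p)
        - (pdp3 (Xi a₀ a₁₁ a₁₂ c₁ c₂) (x, y, p) * f + pdy3 (Xi a₀ a₁₁ a₁₂ c₁ c₂) (x, y, p) * g
          + pdx3 (Xi a₀ a₁₁ a₁₂ c₁ c₂) (x, y, p)) * g)
    = (-a₁₁ + a₂₂ - a₁₂ * (p + g) - c₁ * x + c₂ * (y - x * (p + g))) * (p - g) := by
  simp only [Zeta, pdx3_Xi, pdy3_Xi, pdp3_Xi, pdx3_Eta, pdy3_Eta, pdp3_Eta]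
  ring
end

section
/- Let a, b, ã, b̃ : ℝ³ → ℝ be smooth with a_y b_p − a_p b_y ≠ 0, and suppose ã = φ(a,b), b̃ = ψ(a,b) for smooth φ, ψ with φ_a ψ_b − φ_b ψ_a ≠ 0. Then the functions f = (a_x b_y − a_y b_x)/(a_y b_p − a_p b_y) and g = (a_p b_x − a_x b_p)/(a_y b_p − a_p b_y) are unchanged when (a,b) is replaced by (ã, b̃): f(ã,b̃) = f(a,b) and g(ã,b̃) = g(a,b). -/
/-- Partial derivatives of a function on ℝ³(x,y,p). -/
noncomputable def pdx (F : ℝ × ℝ × ℝ → ℝ) (q : ℝ × ℝ × ℝ) : ℝ :=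
  deriv (fun t => F (t, q.2.1, q.2.2)) q.1
noncomputable def pdy (F : ℝ × ℝ × ℝ → ℝ) (q : ℝ × ℝ × ℝ) : ℝ :=
  deriv (fun t => F (q.1, t, q.2.2)) q.2.1
noncomputable def pdp (F : ℝ × ℝ × ℝ → ℝ) (q : ℝ × ℝ × ℝ) : ℝ :=
  deriv (fun t => F (q.1, q.2.1, t)) q.2.2

/-- Partial derivatives of a function on ℝ²(a,b). -/
noncomputable def pd1 (F : ℝ × ℝ → ℝ) (q : ℝ × ℝ) : ℝ := deriv (fun t => F (t, q.2)) q.1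
noncomputable def pd2 (F : ℝ × ℝ → ℝ) (q : ℝ × ℝ) : ℝ := deriv (fun t => F (q.1, t)) q.2

/-- `f = (a_x b_y − a_y b_x)/(a_y b_p − a_p b_y)`. -/
noncomputable def fOf (a b : ℝ × ℝ × ℝ → ℝ) (q : ℝ × ℝ × ℝ) : ℝ :=
  (pdx a q * pdy b q - pdy a q * pdx b q) / (pdy a q * pdp b q - pdp a q * pdy b q)

/-- `g = (a_p b_x − a_x b_p)/(a_y b_p − a_p b_y)`. -/
noncomputable def gOf (a b : ℝ × ℝ × ℝ → ℝ) (q : ℝ × ℝ × ℝ) : ℝ :=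
  (pdp a q * pdx b q - pdx a q * pdp b q) / (pdy a q * pdp b q - pdp a q * pdy b q)

lemma fderiv_apply_pd (φ : ℝ × ℝ → ℝ) (hφ : ContDiff ℝ (⊤ : ℕ∞) φ) (r : ℝ × ℝ) (u v : ℝ) :
    fderiv ℝ φ r (u, v) = u * pd1 φ r + v * pd2 φ r := by
  have hd := (hφ.differentiable (by simp) r).hasFDerivAt
  have h1 : HasDerivAt (fun t => φ (t, r.2)) (fderiv ℝ φ r (1, 0)) r.1 := by
    have hc : HasDerivAt (fun t : ℝ => (t, r.2)) ((1 : ℝ), (0 : ℝ)) r.1 :=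
      (hasDerivAt_id r.1).prodMk (hasDerivAt_const r.1 r.2)
    simpa [Function.comp_def] using hd.comp_hasDerivAt r.1 hc
  have h2 : HasDerivAt (fun t => φ (r.1, t)) (fderiv ℝ φ r (0, 1)) r.2 := by
    have hc : HasDerivAt (fun t : ℝ => (r.1, t)) ((0 : ℝ), (1 : ℝ)) r.2 :=
      (hasDerivAt_const r.2 r.1).prodMk (hasDerivAt_id r.2)
    simpa [Function.comp_def] using hd.comp_hasDerivAt r.2 hc
  have e1 : pd1 φ r = fderiv ℝ φ r (1, 0) := h1.deriv
  have e2 : pd2 φ r = fderiv ℝ φ r (0, 1) := h2.deriv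
  have : (u, v) = u • ((1 : ℝ), (0 : ℝ)) + v • ((0 : ℝ), (1 : ℝ)) := by
    simp [Prod.ext_iff]
  rw [this, map_add, map_smul, map_smul, e1, e2]
  simp [smul_eq_mul]

lemma hasDerivAt_comp2 (φ : ℝ × ℝ → ℝ) (hφ : ContDiff ℝ (⊤ : ℕ∞) φ) {u v : ℝ → ℝ} {u' v' t : ℝ}
    (hu : HasDerivAt u u' t) (hv : HasDerivAt v v' t) :
    HasDerivAt (fun s => φ (u s, v s))
      (pd1 φ (u t, v t) * u' + pd2 φ (u t, v t) * v') t := by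
  have hd := (hφ.differentiable (by simp) (u t, v t)).hasFDerivAt
  have hc : HasDerivAt (fun s => (u s, v s)) (u', v') t := hu.prodMk hv
  have := hd.comp_hasDerivAt t hc
  rw [fderiv_apply_pd φ hφ _ u' v'] at this
  simpa [mul_comm, Function.comp_def] using this

lemma pdx_hasDerivAt (a : ℝ × ℝ × ℝ → ℝ) (ha : ContDiff ℝ (⊤ : ℕ∞) a) (x y p : ℝ) :
    HasDerivAt (fun t => a (t, y, p)) (pdx a (x, y, p)) x := by
  have : DifferentiableAt ℝ (fun t => a (t, y, p)) x :=
    (ha.differentiable (by simp) (x, y, p)).comp x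
      (differentiableAt_id.prodMk ((differentiableAt_const _).prodMk (differentiableAt_const _)))
  exact this.hasDerivAt

lemma pdy_hasDerivAt (a : ℝ × ℝ × ℝ → ℝ) (ha : ContDiff ℝ (⊤ : ℕ∞) a) (x y p : ℝ) :
    HasDerivAt (fun t => a (x, t, p)) (pdy a (x, y, p)) y := by
  have : DifferentiableAt ℝ (fun t => a (x, t, p)) y :=
    (ha.differentiable (by simp) (x, y, p)).comp y
      ((differentiableAt_const _).prodMk (differentiableAt_id.prodMk (differentiableAt_const _)))
  exact this.hasDerivAt

lemma pdp_hasDerivAt (a : ℝ × ℝ × ℝ → ℝ) (ha : ContDiff ℝ (⊤ : ℕ∞) a) (x y p : ℝ) :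
    HasDerivAt (fun t => a (x, y, t)) (pdp a (x, y, p)) p := by
  have : DifferentiableAt ℝ (fun t => a (x, y, t)) p :=
    (ha.differentiable (by simp) (x, y, p)).comp p
      ((differentiableAt_const _).prodMk ((differentiableAt_const _).prodMk differentiableAt_id))
  exact this.hasDerivAt

/-- the quantities (f,g) are unchanged under fiberwise reparametrizations
`(a,b) ↦ (φ(a,b), ψ(a,b))` with nonvanishing Jacobian. -/
theorem fg_reparametrization_invariance
    (a b : ℝ × ℝ × ℝ → ℝ) (φ ψ : ℝ × ℝ → ℝ)
    (ha : ContDiff ℝ (⊤ : ℕ∞) a) (hb : ContDiff ℝ (⊤ : ℕ∞) b)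
    (hφ : ContDiff ℝ (⊤ : ℕ∞) φ) (hψ : ContDiff ℝ (⊤ : ℕ∞) ψ)
    (hden : ∀ q : ℝ × ℝ × ℝ, pdy a q * pdp b q - pdp a q * pdy b q ≠ 0)
    (hjac : ∀ r : ℝ × ℝ, pd1 φ r * pd2 ψ r - pd2 φ r * pd1 ψ r ≠ 0)
    (at_ bt : ℝ × ℝ × ℝ → ℝ)
    (hat : at_ = fun q => φ (a q, b q)) (hbt : bt = fun q => ψ (a q, b q)) :
    (∀ q : ℝ × ℝ × ℝ, fOf at_ bt q = fOf a b q) ∧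
    (∀ q : ℝ × ℝ × ℝ, gOf at_ bt q = gOf a b q) := by
  subst hat hbt
  have key : ∀ x y p : ℝ,
      let q : ℝ × ℝ × ℝ := (x, y, p)
      let A := pd1 φ (a q, b q); let B := pd2 φ (a q, b q)
      let C := pd1 ψ (a q, b q); let D := pd2 ψ (a q, b q)
      pdx (fun q => φ (a q, b q)) q = A * pdx a q + B * pdx b q ∧
      pdy (fun q => φ (a q, b q)) q = A * pdy a q + B * pdy b q ∧
      pdp (fun q => φ (a q, b q)) q = A * pdp a q + B * pdp b q ∧
      pdx (fun q => ψ (a q, b q)) q = C * pdx a q + D * pdx b q ∧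
      pdy (fun q => ψ (a q, b q)) q = C * pdy a q + D * pdy b q ∧
      pdp (fun q => ψ (a q, b q)) q = C * pdp a q + D * pdp b q := by
    intro x y p
    refine ⟨(hasDerivAt_comp2 φ hφ (pdx_hasDerivAt a ha x y p) (pdx_hasDerivAt b hb x y p)).deriv,
      (hasDerivAt_comp2 φ hφ (pdy_hasDerivAt a ha x y p) (pdy_hasDerivAt b hb x y p)).deriv,
      (hasDerivAt_comp2 φ hφ (pdp_hasDerivAt a ha x y p) (pdp_hasDerivAt b hb x y p)).deriv,
      (hasDerivAt_comp2 ψ hψ (pdx_hasDerivAt a ha x y p) (pdx_hasDerivAt b hb x y p)).deriv,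
      (hasDerivAt_comp2 ψ hψ (pdy_hasDerivAt a ha x y p) (pdy_hasDerivAt b hb x y p)).deriv,
      (hasDerivAt_comp2 ψ hψ (pdp_hasDerivAt a ha x y p) (pdp_hasDerivAt b hb x y p)).deriv⟩
  constructor <;> rintro ⟨x, y, p⟩ <;>
  · obtain ⟨e1, e2, e3, e4, e5, e6⟩ := key x y p
    have hJ := hjac (a (x, y, p), b (x, y, p))
    set A := pd1 φ (a (x, y, p), b (x, y, p))
    set B := pd2 φ (a (x, y, p), b (x, y, p))
    set C := pd1 ψ (a (x, y, p), b (x, y, p))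
    set D := pd2 ψ (a (x, y, p), b (x, y, p))
    simp only [fOf, gOf, e1, e2, e3, e4, e5, e6]
    rw [show (A * pdy a (x, y, p) + B * pdy b (x, y, p)) *
          (C * pdp a (x, y, p) + D * pdp b (x, y, p)) -
        (A * pdp a (x, y, p) + B * pdp b (x, y, p)) *
          (C * pdy a (x, y, p) + D * pdy b (x, y, p)) =
        (A * D - B * C) * (pdy a (x, y, p) * pdp b (x, y, p) -
          pdp a (x, y, p) * pdy b (x, y, p)) from by ring]
    first
    | rw [show (A * pdx a (x, y, p) + B * pdx b (x, y, p)) *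
            (C * pdy a (x, y, p) + D * pdy b (x, y, p)) -
          (A * pdy a (x, y, p) + B * pdy b (x, y, p)) *
            (C * pdx a (x, y, p) + D * pdx b (x, y, p)) =
          (A * D - B * C) * (pdx a (x, y, p) * pdy b (x, y, p) -
            pdy a (x, y, p) * pdx b (x, y, p)) from by ring,
        mul_div_mul_left _ _ hJ]
    | rw [show (A * pdp a (x, y, p) + B * pdp b (x, y, p)) *
            (C * pdx a (x, y, p) + D * pdx b (x, y, p)) -
          (A * pdx a (x, y, p) + B * pdx b (x, y, p)) *
            (C * pdp a (x, y, p) + D * pdp b (x, y, p)) =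
          (A * D - B * C) * (pdp a (x, y, p) * pdx b (x, y, p) -
            pdx a (x, y, p) * pdp b (x, y, p)) from by ring,
        mul_div_mul_left _ _ hJ]
end

section
/- For the prolonged action of the 𝔰𝔩₃ vector fields X = (a₀ + a₁₁x + a₁₂y)∂ₓ + (b₀ + a₂₁x + a₂₂y)∂_y + (c₁x + c₂y)(x∂ₓ + y∂_y) on the jet variables of a single function f(x,y,p) (prolongation of the contact lift to ℝ³(x,y,p) and then to first-order jets of f), the function I₁ = p f_y f_p − 3 f f_y + f_x f_p is a relative invariant with weight μ(I₁) = −4a₁₁ + a₂₂ − 5a₁₂p − 7c₁x − c₂(5xp + 2y), given that I₀ = f is a relative invariant with weight μ(I₀) = −2a₁₁ + a₂₂ − 3a₁₂p − 3c₁x − 3c₂xp; moreover the identity μ(I₁)·I₁ = X̂(I₁) can be verified where X̂ is the full prolongation. -/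
/-! Every coefficient of the prolonged field is a polynomial of degree at most two in each single
jet coordinate, so all the partial derivatives entering it can be computed in closed form. The
`∂_f`-component then comes out as `μ(I₀)·f`, which is the relative invariance of `I₀`, and
`X̂(I₁) = μ(I₁)·I₁` becomes a polynomial identity. -/

noncomputable section

/-- Partials of a curried function of two variables. -/
def dX (F : ℝ → ℝ → ℝ) (x y : ℝ) : ℝ := deriv (fun t => F t y) x
def dY (F : ℝ → ℝ → ℝ) (x y : ℝ) : ℝ := deriv (fun t => F x t) y

/-- The 𝔰𝔩₃ vector field components on ℝ²(x,y). -/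
def xi (a₀ a₁₁ a₁₂ c₁ c₂ : ℝ) (x y : ℝ) : ℝ :=
  a₀ + a₁₁ * x + a₁₂ * y + (c₁ * x + c₂ * y) * x
def eta (b₀ a₂₁ a₂₂ c₁ c₂ : ℝ) (x y : ℝ) : ℝ :=
  b₀ + a₂₁ * x + a₂₂ * y + (c₁ * x + c₂ * y) * y

/-- The contact lift component `ζ = η_x + p(η_y − ξ_x) − p²ξ_y`. -/
def zeta (a₀ a₁₁ a₁₂ b₀ a₂₁ a₂₂ c₁ c₂ : ℝ) (x y p : ℝ) : ℝ :=
  dX (eta b₀ a₂₁ a₂₂ c₁ c₂) x y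
    + p * (dY (eta b₀ a₂₁ a₂₂ c₁ c₂) x y - dX (xi a₀ a₁₁ a₁₂ c₁ c₂) x y)
    - p ^ 2 * dY (xi a₀ a₁₁ a₁₂ c₁ c₂) x y

/-- The ∂_f-component of the lift: the second prolongation coefficient for `y'' = f`,
`ζ⁽²⁾ = ζ_x + pζ_y + fζ_p − f(ξ_x + pξ_y)`. -/
def Fc (a₀ a₁₁ a₁₂ b₀ a₂₁ a₂₂ c₁ c₂ : ℝ) (x y p f : ℝ) : ℝ :=
  deriv (fun t => zeta a₀ a₁₁ a₁₂ b₀ a₂₁ a₂₂ c₁ c₂ t y p) x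
    + p * deriv (fun t => zeta a₀ a₁₁ a₁₂ b₀ a₂₁ a₂₂ c₁ c₂ x t p) y
    + f * deriv (fun t => zeta a₀ a₁₁ a₁₂ b₀ a₂₁ a₂₂ c₁ c₂ x y t) p
    - f * (dX (xi a₀ a₁₁ a₁₂ c₁ c₂) x y + p * dY (xi a₀ a₁₁ a₁₂ c₁ c₂) x y)

/-- The ∂_{f_x}, ∂_{f_y}, ∂_{f_p}-components of the prolonged lift, by total-derivative
prolongation:  `Φ_i = d_i(F) − f_x d_i(ξ) − f_y d_i(η) − f_p d_i(ζ)`. -/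
def PhiX (a₀ a₁₁ a₁₂ b₀ a₂₁ a₂₂ c₁ c₂ : ℝ) (x y p f fx fy fp : ℝ) : ℝ :=
  deriv (fun t => Fc a₀ a₁₁ a₁₂ b₀ a₂₁ a₂₂ c₁ c₂ t y p f) x
    + fx * deriv (fun t => Fc a₀ a₁₁ a₁₂ b₀ a₂₁ a₂₂ c₁ c₂ x y p t) f
    - fx * dX (xi a₀ a₁₁ a₁₂ c₁ c₂) x y - fy * dX (eta b₀ a₂₁ a₂₂ c₁ c₂) x y
    - fp * deriv (fun t => zeta a₀ a₁₁ a₁₂ b₀ a₂₁ a₂₂ c₁ c₂ t y p) x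

def PhiY (a₀ a₁₁ a₁₂ b₀ a₂₁ a₂₂ c₁ c₂ : ℝ) (x y p f fx fy fp : ℝ) : ℝ :=
  deriv (fun t => Fc a₀ a₁₁ a₁₂ b₀ a₂₁ a₂₂ c₁ c₂ x t p f) y
    + fy * deriv (fun t => Fc a₀ a₁₁ a₁₂ b₀ a₂₁ a₂₂ c₁ c₂ x y p t) f
    - fx * dY (xi a₀ a₁₁ a₁₂ c₁ c₂) x y - fy * dY (eta b₀ a₂₁ a₂₂ c₁ c₂) x y
    - fp * deriv (fun t => zeta a₀ a₁₁ a₁₂ b₀ a₂₁ a₂₂ c₁ c₂ x t p) y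

def PhiP (a₀ a₁₁ a₁₂ b₀ a₂₁ a₂₂ c₁ c₂ : ℝ) (x y p f fx fy fp : ℝ) : ℝ :=
  deriv (fun t => Fc a₀ a₁₁ a₁₂ b₀ a₂₁ a₂₂ c₁ c₂ x y t f) p
    + fp * deriv (fun t => Fc a₀ a₁₁ a₁₂ b₀ a₂₁ a₂₂ c₁ c₂ x y p t) f
    - fx * deriv (fun t => xi a₀ a₁₁ a₁₂ c₁ c₂ x y) p
    - fy * deriv (fun t => eta b₀ a₂₁ a₂₂ c₁ c₂ x y) p
    - fp * deriv (fun t => zeta a₀ a₁₁ a₁₂ b₀ a₂₁ a₂₂ c₁ c₂ x y t) p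

section DerivOfPolynomial

variable {𝕜 : Type*} [NontriviallyNormedField 𝕜] {F : 𝕜 → 𝕜} {a b c : 𝕜}

lemma deriv_of_forall_eq_affine (h : ∀ t, F t = a + b * t) (t : 𝕜) : deriv F t = b := by
  rw [funext h]
  simp

lemma deriv_of_forall_eq_quadratic (h : ∀ t, F t = a + b * t + c * t ^ 2) (t : 𝕜) :
    deriv F t = b + 2 * c * t := by
  rw [funext h]
  have hq := (((hasDerivAt_id t).const_mul b).const_add a).add ((hasDerivAt_pow 2 t).const_mul c)
  exact (hq.congr_deriv (by simp; ring)).deriv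

end DerivOfPolynomial

section ClosedForms

variable (a₀ a₁₁ a₁₂ b₀ a₂₁ a₂₂ c₁ c₂ x y p f fx fy fp : ℝ)

lemma dX_xi : dX (xi a₀ a₁₁ a₁₂ c₁ c₂) x y = a₁₁ + 2 * c₁ * x + c₂ * y := by
  have h (t : ℝ) : xi a₀ a₁₁ a₁₂ c₁ c₂ t y = a₀ + a₁₂ * y + (a₁₁ + c₂ * y) * t + c₁ * t ^ 2 := by
    unfold xi; ring
  rw [dX, deriv_of_forall_eq_quadratic h]
  ring

lemma dY_xi : dY (xi a₀ a₁₁ a₁₂ c₁ c₂) x y = a₁₂ + c₂ * x :=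
  deriv_of_forall_eq_affine (a := a₀ + a₁₁ * x + c₁ * x ^ 2) (fun t => by unfold xi; ring) y

lemma dX_eta : dX (eta b₀ a₂₁ a₂₂ c₁ c₂) x y = a₂₁ + c₁ * y :=
  deriv_of_forall_eq_affine (a := b₀ + a₂₂ * y + c₂ * y ^ 2) (fun t => by unfold eta; ring) x

lemma dY_eta : dY (eta b₀ a₂₁ a₂₂ c₁ c₂) x y = a₂₂ + c₁ * x + 2 * c₂ * y := by
  have h (t : ℝ) : eta b₀ a₂₁ a₂₂ c₁ c₂ x t = b₀ + a₂₁ * x + (a₂₂ + c₁ * x) * t + c₂ * t ^ 2 := by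
    unfold eta; ring
  exact deriv_of_forall_eq_quadratic h y

lemma zeta_eq : zeta a₀ a₁₁ a₁₂ b₀ a₂₁ a₂₂ c₁ c₂ x y p
    = a₂₁ + c₁ * y + p * (a₂₂ - a₁₁ - c₁ * x + c₂ * y) - p ^ 2 * (a₁₂ + c₂ * x) := by
  rw [zeta, dX_eta, dY_eta, dX_xi, dY_xi]
  ring

lemma deriv_zeta_x : deriv (fun t => zeta a₀ a₁₁ a₁₂ b₀ a₂₁ a₂₂ c₁ c₂ t y p) x
    = -p * (c₁ + c₂ * p) :=
  deriv_of_forall_eq_affine (a := a₂₁ + c₁ * y + p * (a₂₂ - a₁₁ + c₂ * y) - p ^ 2 * a₁₂)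
    (fun t => by rw [zeta_eq]; ring) x

lemma deriv_zeta_y : deriv (fun t => zeta a₀ a₁₁ a₁₂ b₀ a₂₁ a₂₂ c₁ c₂ x t p) y = c₁ + c₂ * p :=
  deriv_of_forall_eq_affine (a := a₂₁ + p * (a₂₂ - a₁₁ - c₁ * x) - p ^ 2 * (a₁₂ + c₂ * x))
    (fun t => by rw [zeta_eq]; ring) y

lemma deriv_zeta_p : deriv (fun t => zeta a₀ a₁₁ a₁₂ b₀ a₂₁ a₂₂ c₁ c₂ x y t) p
    = a₂₂ - a₁₁ - c₁ * x + c₂ * y - 2 * p * (a₁₂ + c₂ * x) := by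
  have h (t : ℝ) : zeta a₀ a₁₁ a₁₂ b₀ a₂₁ a₂₂ c₁ c₂ x y t
      = a₂₁ + c₁ * y + (a₂₂ - a₁₁ - c₁ * x + c₂ * y) * t + -(a₁₂ + c₂ * x) * t ^ 2 := by
    rw [zeta_eq]; ring
  rw [deriv_of_forall_eq_quadratic h]
  ring

lemma Fc_eq : Fc a₀ a₁₁ a₁₂ b₀ a₂₁ a₂₂ c₁ c₂ x y p f
    = (-2 * a₁₁ + a₂₂ - 3 * a₁₂ * p - 3 * c₁ * x - 3 * c₂ * x * p) * f := by
  rw [Fc, deriv_zeta_x, deriv_zeta_y, deriv_zeta_p, dX_xi, dY_xi]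
  ring

lemma deriv_Fc_x : deriv (fun t => Fc a₀ a₁₁ a₁₂ b₀ a₂₁ a₂₂ c₁ c₂ t y p f) x
    = -3 * (c₁ + c₂ * p) * f :=
  deriv_of_forall_eq_affine (a := (-2 * a₁₁ + a₂₂ - 3 * a₁₂ * p) * f)
    (fun t => by rw [Fc_eq]; ring) x

lemma deriv_Fc_y : deriv (fun t => Fc a₀ a₁₁ a₁₂ b₀ a₂₁ a₂₂ c₁ c₂ x t p f) y = 0 := by
  simp only [Fc_eq, deriv_const]

lemma deriv_Fc_p : deriv (fun t => Fc a₀ a₁₁ a₁₂ b₀ a₂₁ a₂₂ c₁ c₂ x y t f) p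
    = -3 * (a₁₂ + c₂ * x) * f :=
  deriv_of_forall_eq_affine (a := (-2 * a₁₁ + a₂₂ - 3 * c₁ * x) * f)
    (fun t => by rw [Fc_eq]; ring) p

lemma deriv_Fc_f : deriv (fun t => Fc a₀ a₁₁ a₁₂ b₀ a₂₁ a₂₂ c₁ c₂ x y p t) f
    = -2 * a₁₁ + a₂₂ - 3 * a₁₂ * p - 3 * c₁ * x - 3 * c₂ * x * p :=
  deriv_of_forall_eq_affine (a := 0) (fun t => by rw [Fc_eq]; ring) f

lemma PhiX_eq : PhiX a₀ a₁₁ a₁₂ b₀ a₂₁ a₂₂ c₁ c₂ x y p f fx fy fp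
    = -3 * (c₁ + c₂ * p) * f
      + fx * (-3 * a₁₁ + a₂₂ - 3 * a₁₂ * p - 5 * c₁ * x - 3 * c₂ * x * p - c₂ * y)
      - fy * (a₂₁ + c₁ * y) + fp * p * (c₁ + c₂ * p) := by
  rw [PhiX, deriv_Fc_x, deriv_Fc_f, dX_xi, dX_eta, deriv_zeta_x]
  ring

lemma PhiY_eq : PhiY a₀ a₁₁ a₁₂ b₀ a₂₁ a₂₂ c₁ c₂ x y p f fx fy fp
    = fy * (-2 * a₁₁ - 3 * a₁₂ * p - 4 * c₁ * x - 3 * c₂ * x * p - 2 * c₂ * y)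
      - fx * (a₁₂ + c₂ * x) - fp * (c₁ + c₂ * p) := by
  rw [PhiY, deriv_Fc_y, deriv_Fc_f, dY_xi, dY_eta, deriv_zeta_y]
  ring

lemma PhiP_eq : PhiP a₀ a₁₁ a₁₂ b₀ a₂₁ a₂₂ c₁ c₂ x y p f fx fy fp
    = -3 * (a₁₂ + c₂ * x) * f
      + fp * (-a₁₁ - a₁₂ * p - 2 * c₁ * x - c₂ * x * p - c₂ * y) := by
  rw [PhiP, deriv_Fc_p, deriv_Fc_f, deriv_const, deriv_const, deriv_zeta_p]
  ring

end ClosedForms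

/-- `I₀ = f` is a relative invariant of weight
`μ(I₀) = −2a₁₁ + a₂₂ − 3a₁₂p − 3c₁x − 3c₂xp`, and `I₁ = p f_y f_p − 3 f f_y + f_x f_p` is a
relative invariant of weight `μ(I₁) = −4a₁₁ + a₂₂ − 5a₁₂p − 7c₁x − c₂(5xp + 2y)`:
`X̂(I₁) = μ(I₁)·I₁` where `X̂` is the full prolongation of the 𝔰𝔩₃ field. -/
theorem I1_relative_invariant_sl3 (a₀ a₁₁ a₁₂ b₀ a₂₁ a₂₂ c₁ c₂ : ℝ)
    (x y p f fx fy fp : ℝ) :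
    -- X̂(I₀) = μ(I₀)·I₀ :
    Fc a₀ a₁₁ a₁₂ b₀ a₂₁ a₂₂ c₁ c₂ x y p f
      = (-2 * a₁₁ + a₂₂ - 3 * a₁₂ * p - 3 * c₁ * x - 3 * c₂ * x * p) * f ∧
    -- X̂(I₁) = μ(I₁)·I₁ :
    zeta a₀ a₁₁ a₁₂ b₀ a₂₁ a₂₂ c₁ c₂ x y p * (fy * fp)
      + Fc a₀ a₁₁ a₁₂ b₀ a₂₁ a₂₂ c₁ c₂ x y p f * (-3 * fy)
      + PhiX a₀ a₁₁ a₁₂ b₀ a₂₁ a₂₂ c₁ c₂ x y p f fx fy fp * fp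
      + PhiY a₀ a₁₁ a₁₂ b₀ a₂₁ a₂₂ c₁ c₂ x y p f fx fy fp * (p * fp - 3 * f)
      + PhiP a₀ a₁₁ a₁₂ b₀ a₂₁ a₂₂ c₁ c₂ x y p f fx fy fp * (p * fy + fx)
    = (-4 * a₁₁ + a₂₂ - 5 * a₁₂ * p - 7 * c₁ * x - c₂ * (5 * x * p + 2 * y))
        * (p * fy * fp - 3 * f * fy + fx * fp) := by
  refine ⟨Fc_eq .., ?_⟩
  rw [zeta_eq, Fc_eq, PhiX_eq, PhiY_eq, PhiP_eq]
  ring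
end
end
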